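/- For every δ with 0 < δ < 1/8, ∫_δ^{1/2} ∫_{1/2}^{1-δ} 1/(ts + (1-t)(1-s)) dμ(t) dμ(s) ≥ (1/π²)·ln(1/(8δ)), where dμ(t) = dt/(π√(t(1-t))). -/

import Mathlib

/-!
On the rectangle `t ≤ 1/2 ≤ s` the denominator `t s + (1 - t)(1 - s)` is at most `t + 1 - s`, and
by AM-GM `√(t (1 - t)) √(s (1 - s)) ≤ √(t (1 - s)) ≤ (t + 1 - s) / 2`. Hence the integrand dominates
`2 / (π² (t + 1 - s)²)`, whose integral over the rectangle is `(2/π²) log ((1/2 + δ)² / (2δ))`,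
and this exceeds `(1/π²) log (1 / (8δ))`.
-/

open MeasureTheory Set Real

noncomputable def energyKernel (t s : ℝ) : ℝ := 1 / (t * s + (1 - t) * (1 - s))

noncomputable def arcsineDensity (x : ℝ) : ℝ := 1 / (π * √(x * (1 - x)))

theorem continuousOn_intervalIntegral_of_continuousOn_Icc_prod {f : ℝ → ℝ → ℝ} {a b c d : ℝ}
    (hab : a ≤ b) (hcd : c ≤ d) (hf : ContinuousOn (Function.uncurry f) (Icc a b ×ˢ Icc c d)) :
    ContinuousOn (fun t => ∫ s in c..d, f t s) (Icc a b) := by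
  -- clamping both variables to the rectangle gives a continuous extension of `f` to the plane
  set g : ℝ → ℝ → ℝ := fun t s => f (projIcc a b hab t) (projIcc c d hcd s)
  have hg : Continuous (Function.uncurry g) :=
    hf.comp_continuous
      ((continuous_subtype_val.comp (continuous_projIcc (h := hab))).prodMap
        (continuous_subtype_val.comp (continuous_projIcc (h := hcd))))
      fun p => ⟨(projIcc a b hab p.1).2, (projIcc c d hcd p.2).2⟩
  refine (intervalIntegral.continuous_parametric_intervalIntegral_of_continuous' hg c d)
    |>.continuousOn.congr fun t ht => intervalIntegral.integral_congr fun s hs => ?_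
  rw [uIcc_of_le hcd] at hs
  simp only [g, projIcc_of_mem hab ht, projIcc_of_mem hcd hs]

theorem intervalIntegrable_one_div_add {a b c : ℝ} (ha : 0 < a + c) (hb : 0 < b + c) :
    IntervalIntegrable (fun x => 1 / (x + c)) volume a b := by
  refine intervalIntegral.intervalIntegrable_one_div (fun x hx => ?_) (by fun_prop)
  have hmin : 0 < min a b + c := by rw [← min_add_add_right]; exact lt_min ha hb
  linarith [hx.1]

theorem integral_one_div_add {a b c : ℝ} (ha : 0 < a + c) (hb : 0 < b + c) :
    ∫ x in a..b, 1 / (x + c) = log ((b + c) / (a + c)) := by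
  rw [intervalIntegral.integral_comp_add_right (fun x => 1 / x), integral_one_div_of_pos ha hb]

theorem intervalIntegrable_one_div_sub_sq {a b c : ℝ} (hab : a ≤ b) (hbc : b < c) :
    IntervalIntegrable (fun s => 1 / (c - s) ^ 2) volume a b := by
  refine intervalIntegral.intervalIntegrable_one_div (fun s hs => ?_) (by fun_prop)
  rw [uIcc_of_le hab] at hs
  have : 0 < c - s := by linarith [hs.2]
  positivity

theorem integral_one_div_sub_sq {a b c : ℝ} (hab : a ≤ b) (hbc : b < c) :
    ∫ s in a..b, 1 / (c - s) ^ 2 = 1 / (c - b) - 1 / (c - a) := by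
  refine intervalIntegral.integral_eq_sub_of_hasDerivAt (f := fun s => 1 / (c - s)) (fun s hs => ?_)
    (intervalIntegrable_one_div_sub_sq hab hbc)
  rw [uIcc_of_le hab] at hs
  have hs' : c - s ≠ 0 := by linarith [hs.2]
  exact ((hasDerivAt_const s (1 : ℝ)).fun_div ((hasDerivAt_id' s).const_sub c) hs').congr_deriv
    (by ring)

theorem sqrt_mul_sqrt_le_add_one_sub_div_two {t s : ℝ} (ht : t ∈ Icc (0 : ℝ) 1)
    (hs : s ∈ Icc (0 : ℝ) 1) :
    √(t * (1 - t)) * √(s * (1 - s)) ≤ (t + 1 - s) / 2 := by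
  obtain ⟨ht0, ht1⟩ := ht
  obtain ⟨hs0, hs1⟩ := hs
  calc √(t * (1 - t)) * √(s * (1 - s)) ≤ √t * √(1 - s) :=
        mul_le_mul (sqrt_le_sqrt (by nlinarith)) (sqrt_le_sqrt (by nlinarith)) (sqrt_nonneg _)
          (sqrt_nonneg _)
    _ = √(t * (1 - s)) := (sqrt_mul ht0 _).symm
    _ ≤ (t + 1 - s) / 2 :=
        sqrt_le_iff.2 ⟨by linarith, by nlinarith [sq_nonneg (t - (1 - s))]⟩

theorem continuousOn_energyKernel_mul :
    ContinuousOn (Function.uncurry fun t s => energyKernel t s * arcsineDensity t * arcsineDensity s)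
      (Ioo 0 1 ×ˢ Ioo 0 1) := by
  have hweight : ∀ x ∈ Ioo (0 : ℝ) 1, π * √(x * (1 - x)) ≠ 0 := fun x hx =>
    (mul_pos pi_pos (sqrt_pos.2 (mul_pos hx.1 (sub_pos.2 hx.2)))).ne'
  simp only [energyKernel, arcsineDensity]
  refine ((continuousOn_const.div (by fun_prop) fun p hp => ?_).mul
    (continuousOn_const.div (by fun_prop) fun p hp => hweight p.1 hp.1)).mul
    (continuousOn_const.div (by fun_prop) fun p hp => hweight p.2 hp.2)
  obtain ⟨⟨ht0, ht1⟩, hs0, hs1⟩ := hp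
  exact (add_pos (mul_pos ht0 hs0) (mul_pos (sub_pos.2 ht1) (sub_pos.2 hs1))).ne'

theorem two_div_pi_sq_mul_one_div_sq_le_energyKernel_mul {t s : ℝ} (ht : t ∈ Ioo (0 : ℝ) 1)
    (hs : s ∈ Ioo (0 : ℝ) 1) :
    2 / π ^ 2 * (1 / (t + 1 - s) ^ 2) ≤
      energyKernel t s * arcsineDensity t * arcsineDensity s := by
  obtain ⟨ht0, ht1⟩ := ht
  obtain ⟨hs0, hs1⟩ := hs
  have hsum : 0 < t + 1 - s := by linarith
  have hden_le : t * s + (1 - t) * (1 - s) ≤ t + 1 - s := by nlinarith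
  have hw_le := sqrt_mul_sqrt_le_add_one_sub_div_two ⟨ht0.le, ht1.le⟩ ⟨hs0.le, hs1.le⟩
  calc 2 / π ^ 2 * (1 / (t + 1 - s) ^ 2)
      = 1 / (π ^ 2 * ((t + 1 - s) * ((t + 1 - s) / 2))) := by
        field_simp
    _ ≤ 1 / (π ^ 2 * ((t * s + (1 - t) * (1 - s)) * (√(t * (1 - t)) * √(s * (1 - s))))) := by
        gcongr
    _ = energyKernel t s * arcsineDensity t * arcsineDensity s := by
        simp only [energyKernel, arcsineDensity, one_div, mul_inv]
        ring

theorem le_integral_energyKernel_mul {t a b : ℝ} (ht : t ∈ Ioo (0 : ℝ) 1) (hab : a ≤ b)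
    (ha : 0 < a) (hb : b < 1) :
    2 / π ^ 2 * (1 / (t + 1 - b) - 1 / (t + 1 - a)) ≤
      ∫ s in a..b, energyKernel t s * arcsineDensity t * arcsineDensity s := by
  have hsub : Icc a b ⊆ Ioo 0 1 := Icc_subset_Ioo ha hb
  have hint : IntervalIntegrable (fun s => energyKernel t s * arcsineDensity t * arcsineDensity s)
      volume a b := by
    exact ContinuousOn.intervalIntegrable_of_Icc hab (continuousOn_energyKernel_mul.comp
      (Continuous.prodMk_right t).continuousOn fun s hs => ⟨ht, hsub hs⟩)
  rw [← integral_one_div_sub_sq hab (by linarith [ht.1]), ← intervalIntegral.integral_const_mul]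
  refine intervalIntegral.integral_mono_on hab
    ((intervalIntegrable_one_div_sub_sq hab (by linarith [ht.1])).const_mul _) hint
    fun s hs => two_div_pi_sq_mul_one_div_sq_le_energyKernel_mul ht (hsub hs)

theorem integral_one_div_add_sub_one_div_add {δ : ℝ} (h0 : 0 < δ) :
    ∫ t in δ..(1/2 : ℝ), (1 / (t + δ) - 1 / (t + 1/2)) = log ((1/2 + δ) ^ 2 / (2 * δ)) := by
  rw [intervalIntegral.integral_sub (intervalIntegrable_one_div_add (by linarith) (by linarith))
    (intervalIntegrable_one_div_add (by linarith) (by linarith)),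
    integral_one_div_add (by linarith) (by linarith),
    integral_one_div_add (by linarith) (by linarith), ← log_div (by positivity) (by positivity)]
  congr 1
  field_simp
  ring

theorem log_one_div_eight_mul_le {δ : ℝ} (h0 : 0 < δ) :
    log (1 / (8 * δ)) ≤ 2 * log ((1/2 + δ) ^ 2 / (2 * δ)) := by
  calc log (1 / (8 * δ)) ≤ log (((1/2 + δ) ^ 2 / (2 * δ)) ^ 2) := by
        refine log_le_log (by positivity) ?_
        rw [div_pow, div_le_div_iff₀ (by positivity) (by positivity)]
        nlinarith [pow_pos h0 2, pow_pos h0 3, pow_pos h0 4]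
    _ = 2 * log ((1/2 + δ) ^ 2 / (2 * δ)) := by rw [log_pow]; norm_num

theorem rectangle_energy_lower (δ : ℝ) (h0 : 0 < δ) (h1 : δ < 1/8) :
    (1 / Real.pi ^ 2) * Real.log (1/(8*δ)) ≤
      ∫ t in δ..(1/2 : ℝ), ∫ s in (1/2 : ℝ)..(1 - δ),
        (1 / (t * s + (1 - t) * (1 - s))) *
          (1 / (Real.pi * Real.sqrt (t * (1 - t)))) *
          (1 / (Real.pi * Real.sqrt (s * (1 - s)))) := by
  change _ ≤ ∫ t in δ..(1/2 : ℝ), ∫ s in (1/2 : ℝ)..(1 - δ),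
    energyKernel t s * arcsineDensity t * arcsineDensity s
  have hδ : δ ≤ 1/2 := by linarith
  have hrect : Icc δ (1/2) ⊆ Ioo 0 1 := Icc_subset_Ioo h0 (by norm_num)
  have hinner := continuousOn_intervalIntegral_of_continuousOn_Icc_prod (c := 1/2) (d := 1 - δ) hδ
    (by linarith)
    (continuousOn_energyKernel_mul.mono
      (prod_mono hrect (Icc_subset_Ioo (by norm_num) (by linarith))))
  calc 1 / π ^ 2 * log (1 / (8 * δ)) ≤ 2 / π ^ 2 * log ((1/2 + δ) ^ 2 / (2 * δ)) := by
        rw [← mul_one_div 2, mul_comm 2, mul_assoc]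
        gcongr
        exact log_one_div_eight_mul_le h0
    _ = ∫ t in δ..(1/2 : ℝ), 2 / π ^ 2 * (1 / (t + δ) - 1 / (t + 1/2)) := by
        rw [intervalIntegral.integral_const_mul, integral_one_div_add_sub_one_div_add h0]
    _ ≤ _ := by
        refine intervalIntegral.integral_mono_on hδ
          (((intervalIntegrable_one_div_add (by linarith) (by linarith)).sub
            (intervalIntegrable_one_div_add (by linarith) (by linarith))).const_mul _)
          (hinner.intervalIntegrable_of_Icc hδ) fun t ht => ?_
        convert le_integral_energyKernel_mul (a := 1/2) (b := 1 - δ) (hrect ht) (by linarith)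
          one_half_pos (by linarith) using 3 <;> ring
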